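/- arXiv:math/0208159 — 4 statements merged into one kernel-verified Lean document; each statement's English description precedes it below -/
import Mathlib

section
/- Let ν be a complex number and suppose χ is a holomorphic function on a punctured disk {z : 0 < |z| < ε} satisfying χ'(z) + χ(z)² = ν² and lim_{z→0} z·χ(z) = 1. If ν ≠ 0, then χ(z) = ν·coth(νz) on some punctured neighborhood of 0; if ν = 0, then χ(z) = 1/z on some punctured neighborhood of 0. -/
/-!
Put `s z = sinh (ν z)` (or `s z = z` when `ν = 0`), so that `s'' = ν² s`, `s 0 = 0`, `s' 0 ≠ 0`,
and the claimed solution is `s' / s`. For a solution `χ`, the function `W = s (s χ - s')` satisfies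
`W' s² = -W²`, and `z χ z → 1` gives `W z / z → 0`. By the removable singularity theorem `W` is
meromorphic at `0` of order `n ≥ 2`. If `n` were finite, comparing orders in `W' s² = -W²` would
give `(n - 1) + 2 = 2 n`. Hence `W` vanishes near `0`, i.e. `χ = s' / s`.
-/

open Complex Filter Topology

noncomputable def coth (z : ℂ) : ℂ := Complex.cosh z / Complex.sinh z

theorem eventually_nhdsNE_zero_iff_norm {E : Type*} [NormedAddCommGroup E] {p : E → Prop} :
    (∀ᶠ z in 𝓝[≠] 0, p z) ↔ ∃ δ > 0, ∀ z : E, 0 < ‖z‖ → ‖z‖ < δ → p z := by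
  simp only [Filter.Eventually, Metric.mem_nhdsWithin_iff, Set.subset_def, Set.mem_inter_iff,
    Metric.mem_ball, dist_zero_right, Set.mem_compl_singleton_iff, norm_pos_iff]
  refine exists_congr fun δ => and_congr_right fun _ => ?_
  exact ⟨fun h z hz hδ => h z ⟨hδ, hz⟩, fun h z hz => h z hz.2 hz.1⟩

theorem meromorphicOrderAt_eq_top_of_deriv_mul_sq_eq_neg_sq {𝕜 : Type*}
    [NontriviallyNormedField 𝕜] [CompleteSpace 𝕜] [CharZero 𝕜] {W s : 𝕜 → 𝕜} {x : 𝕜}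
    (hs : meromorphicOrderAt s x = 1) (hW : 1 < meromorphicOrderAt W x)
    (hWs : ∀ᶠ z in 𝓝[≠] x, deriv W z * s z ^ 2 = -W z ^ 2) :
    meromorphicOrderAt W x = ⊤ := by
  have hWm : MeromorphicAt W x :=
    meromorphicAt_of_meromorphicOrderAt_ne_zero (hW.trans' one_pos).ne'
  have hsm : MeromorphicAt s x := meromorphicAt_of_meromorphicOrderAt_ne_zero (by simp [hs])
  by_contra hne
  obtain ⟨n, hn⟩ := WithTop.ne_top_iff_exists.1 hne
  have hn1 : 1 < n := by exact_mod_cast hn ▸ hW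
  have hW' : meromorphicOrderAt (deriv W) x = ↑(n - 1) :=
    meromorphicOrderAt_deriv_eq_sub_one (Int.cast_ne_zero.2 (by omega)) hn.symm
  have h : meromorphicOrderAt (deriv W * s ^ 2) x = meromorphicOrderAt (-(W ^ 2)) x :=
    meromorphicOrderAt_congr hWs
  rw [meromorphicOrderAt_mul hWm.deriv (hsm.pow 2), ← meromorphicOrderAt_neg,
    meromorphicOrderAt_pow hsm, meromorphicOrderAt_pow hWm, hW', hs, ← hn] at h
  simp only [Nat.cast_ofNat, mul_one] at h
  have h' : ((n - 1 + 2 : ℤ) : WithTop ℤ) = ((2 * n : ℤ) : WithTop ℤ) := by push_cast; exact h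
  have := WithTop.coe_injective h'
  omega

theorem meromorphicOrderAt_pos_of_tendsto_zero {E : Type*} [NormedAddCommGroup E]
    [NormedSpace ℂ E] [CompleteSpace E] {F : ℂ → E} {c : ℂ}
    (hd : ∀ᶠ z in 𝓝[≠] c, DifferentiableAt ℂ F z) (hl : Tendsto F (𝓝[≠] c) (𝓝 0)) :
    0 < meromorphicOrderAt F c := by
  have hupd : Function.update F c 0 =ᶠ[𝓝[≠] c] F := by
    filter_upwards [self_mem_nhdsWithin] with z hz using Function.update_of_ne hz _ _
  have ha : AnalyticAt ℂ (Function.update F c 0) c := by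
    refine analyticAt_of_differentiable_on_punctured_nhds_of_continuousAt ?_
      (continuousAt_update_same.2 hl)
    filter_upwards [hd, self_mem_nhdsWithin] with z hz hzc
    have hFz : Function.update F c 0 =ᶠ[𝓝 z] F :=
      (eventually_ne_nhds hzc).mono fun w hw => Function.update_of_ne hw _ _
    exact hFz.differentiableAt_iff.2 hz
  exact (tendsto_zero_iff_meromorphicOrderAt_pos (ha.meromorphicAt.congr hupd)).1 hl

theorem one_lt_meromorphicOrderAt_of_tendsto_div_sub {F : ℂ → ℂ} {c : ℂ}
    (hd : ∀ᶠ z in 𝓝[≠] c, DifferentiableAt ℂ F z)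
    (hl : Tendsto (fun z => F z / (z - c)) (𝓝[≠] c) (𝓝 0)) :
    1 < meromorphicOrderAt F c := by
  have hpos : 0 < meromorphicOrderAt (fun z => F z / (z - c)) c := by
    refine meromorphicOrderAt_pos_of_tendsto_zero ?_ hl
    filter_upwards [hd, self_mem_nhdsWithin] with z hz (hzc : z ≠ c)
    exact hz.div (differentiableAt_id.sub_const c) (sub_ne_zero.2 hzc)
  have hF : F =ᶠ[𝓝[≠] c] (· - c) * fun z => F z / (z - c) := by
    filter_upwards [self_mem_nhdsWithin] with z (hzc : z ≠ c)
    simp [mul_div_cancel₀ _ (sub_ne_zero.2 hzc)]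
  rw [meromorphicOrderAt_congr hF, meromorphicOrderAt_mul (by fun_prop)
    (meromorphicAt_of_meromorphicOrderAt_ne_zero hpos.ne'), meromorphicOrderAt_id_sub_const]
  simpa using WithTop.add_lt_add_left WithTop.one_ne_top hpos

theorem AnalyticAt.meromorphicOrderAt_eq_one_of_zero_deriv_ne_zero {𝕜 : Type*}
    [NontriviallyNormedField 𝕜] {s : 𝕜 → 𝕜} {x : 𝕜} (hs : AnalyticAt 𝕜 s x) (hs0 : s x = 0)
    (hs' : deriv s x ≠ 0) : meromorphicOrderAt s x = 1 := by
  rw [hs.meromorphicOrderAt_eq, hs.analyticOrderAt_eq_one_of_zero_deriv_ne_zero hs0 hs']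
  rfl

theorem eventuallyEq_div_of_riccati {c : ℂ} {χ s s' : ℂ → ℂ}
    (hs : ∀ᶠ z in 𝓝 0, HasDerivAt s (s' z) z)
    (hs' : ∀ᶠ z in 𝓝 0, HasDerivAt s' (c * s z) z)
    (hs0 : s 0 = 0) (hs'0 : s' 0 ≠ 0)
    (hχ : ∀ᶠ z in 𝓝[≠] 0, HasDerivAt χ (c - χ z ^ 2) z)
    (hlim : Tendsto (fun z => z * χ z) (𝓝[≠] 0) (𝓝 1)) :
    χ =ᶠ[𝓝[≠] 0] fun z => s' z / s z := by
  set W : ℂ → ℂ := fun z => s z * (s z * χ z - s' z) with hW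
  have hs_zero : HasDerivAt s (s' 0) 0 := hs.self_of_nhds
  have hslope : Tendsto (fun z => s z / z) (𝓝[≠] 0) (𝓝 (s' 0)) := by
    simpa [slope_fun_def_field, hs0] using hs_zero.tendsto_slope
  have hsχ : Tendsto (fun z => s z * χ z - s' z) (𝓝[≠] 0) (𝓝 0) := by
    have h := (hslope.mul hlim).sub
      (hs'.self_of_nhds.continuousAt.tendsto.mono_left nhdsWithin_le_nhds)
    rw [mul_one, sub_self] at h
    refine h.congr' ?_
    filter_upwards [self_mem_nhdsWithin] with z (hz : z ≠ 0)
    field_simp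
  have hWz : Tendsto (fun z => W z / z) (𝓝[≠] 0) (𝓝 0) := by
    have h := hslope.mul hsχ
    rw [mul_zero] at h
    exact h.congr fun z => by simp only [hW]; ring
  have hW' : ∀ᶠ z in 𝓝[≠] 0, HasDerivAt W (-(s z * χ z - s' z) ^ 2) z := by
    filter_upwards [hχ, hs.filter_mono nhdsWithin_le_nhds, hs'.filter_mono nhdsWithin_le_nhds]
      with z hχz hsz hs'z
    exact (hsz.fun_mul ((hsz.fun_mul hχz).fun_sub hs'z)).congr_deriv (by ring)
  have hordW : 1 < meromorphicOrderAt W 0 := by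
    refine one_lt_meromorphicOrderAt_of_tendsto_div_sub ?_ (by simpa using hWz)
    filter_upwards [hW'] with z hz using hz.differentiableAt
  have hords : meromorphicOrderAt s 0 = 1 :=
    (Complex.analyticAt_iff_eventually_differentiableAt.2 (hs.mono fun z h => h.differentiableAt)
      ).meromorphicOrderAt_eq_one_of_zero_deriv_ne_zero hs0 (hs_zero.deriv ▸ hs'0)
  have hWs : ∀ᶠ z in 𝓝[≠] 0, deriv W z * s z ^ 2 = -W z ^ 2 := by
    filter_upwards [hW'] with z h
    rw [h.deriv]
    ring
  have hW_eq_zero := meromorphicOrderAt_eq_top_iff.1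
    (meromorphicOrderAt_eq_top_of_deriv_mul_sq_eq_neg_sq hords hordW hWs)
  filter_upwards [hW_eq_zero, hs_zero.eventually_ne hs'0 (c := 0)] with z hWz0 hsz
  rw [eq_div_iff hsz]
  linear_combination (mul_eq_zero.1 hWz0).resolve_left hsz

/-- Uniqueness for the Riccati equation χ' + χ² = ν² with z·χ(z) → 1. -/
theorem stmt4 (ν : ℂ) (χ : ℂ → ℂ) (ε : ℝ) (hε : 0 < ε)
    (hdiff : ∀ z : ℂ, 0 < ‖z‖ → ‖z‖ < ε →
      HasDerivAt χ (ν ^ 2 - χ z ^ 2) z)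
    (hlim : Tendsto (fun z : ℂ => z * χ z) (𝓝[≠] (0 : ℂ)) (𝓝 1)) :
    (ν ≠ 0 → ∃ δ > 0, ∀ z : ℂ, 0 < ‖z‖ → ‖z‖ < δ →
        χ z = ν * coth (ν * z)) ∧
    (ν = 0 → ∃ δ > 0, ∀ z : ℂ, 0 < ‖z‖ → ‖z‖ < δ →
        χ z = 1 / z) := by
  have hχ : ∀ᶠ z in 𝓝[≠] 0, HasDerivAt χ (ν ^ 2 - χ z ^ 2) z :=
    eventually_nhdsNE_zero_iff_norm.2 ⟨ε, hε, hdiff⟩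
  refine ⟨fun hν => eventually_nhdsNE_zero_iff_norm.1 ?_,
    fun hν => eventually_nhdsNE_zero_iff_norm.1 ?_⟩
  · have hsinh (z : ℂ) : HasDerivAt (fun w => sinh (ν * w)) (ν * cosh (ν * z)) z := by
      simpa [mul_comm] using ((hasDerivAt_id z).const_mul ν).csinh
    have hcosh (z : ℂ) :
        HasDerivAt (fun w => ν * cosh (ν * w)) (ν ^ 2 * sinh (ν * z)) z := by
      simpa [mul_comm, mul_left_comm, sq, mul_assoc] using
        ((hasDerivAt_id z).const_mul ν).ccosh.const_mul ν
    filter_upwards [eventuallyEq_div_of_riccati (.of_forall hsinh) (.of_forall hcosh) (by simp)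
      (by simpa using hν) hχ hlim] with z hz
    rw [hz, coth, mul_div_assoc]
  · subst hν
    filter_upwards [eventuallyEq_div_of_riccati (s := id) (s' := fun _ => 1)
      (.of_forall hasDerivAt_id) (.of_forall fun z => by simpa using hasDerivAt_const z (1 : ℂ))
      rfl one_ne_zero hχ hlim] with z hz
    exact hz
end

section
/- Let ν be a nonzero complex number, μ = 1/4 − ν², θ(z) = (1/2)·coth(z/2), and F(z) = ν·coth(νz) − θ(z). Then for all complex z, w such that z, w, and z+w all satisfy sinh(·/2) ≠ 0 and sinh(ν·) ≠ 0, the functional equation F(z)F(w) − F(z+w)(F(z)+F(w)) − θ(z)(F(z+w)−F(w)) − θ(w)(F(z+w)−F(z)) − θ(z+w)(F(z)+F(w)) − μ = 0 holds. -/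
/-!
With `T = coth (· / 2)` and `S = coth (ν ·)`, the left-hand side is a polynomial in the six values
`T z, T w, T (z + w), S z, S w, S (z + w)`, and it is exactly `1/4` times the addition law
`T (z + w) (T z + T w) = 1 + T z T w` minus `ν²` times the same law for `S`.
-/

open Complex

noncomputable def theta (z : ℂ) : ℂ := (1 / 2 : ℂ) * coth (z / 2)

noncomputable def F (ν z : ℂ) : ℂ := ν * coth (ν * z) - theta z

theorem coth_add_mul_add {x y : ℂ} (hx : sinh x ≠ 0) (hy : sinh y ≠ 0) (hxy : sinh (x + y) ≠ 0) :
    coth (x + y) * (coth x + coth y) = 1 + coth x * coth y := by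
  simp only [coth]
  field_simp
  rw [sinh_add, cosh_add]
  ring

theorem stmt8_general (ν : ℂ) (z w : ℂ)
    (hz1 : Complex.sinh (z / 2) ≠ 0) (hz2 : Complex.sinh (ν * z) ≠ 0)
    (hw1 : Complex.sinh (w / 2) ≠ 0) (hw2 : Complex.sinh (ν * w) ≠ 0)
    (hzw1 : Complex.sinh ((z + w) / 2) ≠ 0)
    (hzw2 : Complex.sinh (ν * (z + w)) ≠ 0) :
    F ν z * F ν w - F ν (z + w) * (F ν z + F ν w)
      - theta z * (F ν (z + w) - F ν w)
      - theta w * (F ν (z + w) - F ν z)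
      - theta (z + w) * (F ν z + F ν w)
      - (1 / 4 - ν ^ 2) = 0 := by
  rw [add_div] at hzw1
  rw [mul_add] at hzw2
  have hT := coth_add_mul_add hz1 hw1 hzw1
  have hS := coth_add_mul_add hz2 hw2 hzw2
  simp only [F, theta, add_div, mul_add]
  linear_combination (1 / 4 : ℂ) * hT - ν ^ 2 * hS

/-- The functional equation arising from the PL-CDYBE. -/
theorem stmt8 (ν : ℂ) (hν : ν ≠ 0) (z w : ℂ)
    (hz1 : Complex.sinh (z / 2) ≠ 0) (hz2 : Complex.sinh (ν * z) ≠ 0)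
    (hw1 : Complex.sinh (w / 2) ≠ 0) (hw2 : Complex.sinh (ν * w) ≠ 0)
    (hzw1 : Complex.sinh ((z + w) / 2) ≠ 0)
    (hzw2 : Complex.sinh (ν * (z + w)) ≠ 0) :
    F ν z * F ν w - F ν (z + w) * (F ν z + F ν w)
      - theta z * (F ν (z + w) - F ν w)
      - theta w * (F ν (z + w) - F ν z)
      - theta (z + w) * (F ν z + F ν w)
      - (1 / 4 - ν ^ 2) = 0 :=
  stmt8_general ν z w hz1 hz2 hw1 hw2 hzw1 hzw2
end

section
/- Suppose F is holomorphic in a neighborhood of 0 in ℂ, odd, with F(0) = 0, and satisfies F'(z) + 2θ(z)F(z) + F(z)² + μ = 0 on a punctured neighborhood of 0, where θ(z) = (1/2)coth(z/2) and μ is a complex constant. Write μ = 1/4 − ν² for some ν ∈ ℂ. Then on a punctured neighborhood of 0, F(z) + θ(z) = ν·coth(νz) if ν ≠ 0, and F(z) + θ(z) = 1/z if ν = 0. -/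
open Complex Filter Topology

noncomputable def sinhc : ℂ → ℂ := dslope sinh 0

lemma differentiable_sinhc : Differentiable ℂ sinhc := fun _ =>
  ((differentiableOn_dslope univ_mem).mpr differentiable_sinh.differentiableOn).differentiableAt
    univ_mem

@[simp] lemma sinhc_zero : sinhc 0 = 1 := by simp [sinhc, dslope_same]

lemma sinhc_of_ne {w : ℂ} (hw : w ≠ 0) : sinhc w = sinh w / w := by
  simp [sinhc, dslope_of_ne _ hw, slope_def_field]

noncomputable def zcoth (w : ℂ) : ℂ := cosh w / sinhc w

@[simp] lemma zcoth_zero : zcoth 0 = 1 := by simp [zcoth]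

lemma zcoth_of_ne {w : ℂ} (hw : w ≠ 0) : zcoth w = w * coth w := by
  rw [zcoth, sinhc_of_ne hw, coth, div_div_eq_mul_div, mul_comm, mul_div_assoc]

lemma analyticAt_zcoth : AnalyticAt ℂ zcoth 0 :=
  (differentiable_cosh.analyticAt 0).div (differentiable_sinhc.analyticAt 0) (by simp)

lemma hasDerivAt_coth {z : ℂ} (hz : sinh z ≠ 0) : HasDerivAt coth (1 - coth z ^ 2) z := by
  refine ((hasDerivAt_cosh z).div (hasDerivAt_sinh z) hz).congr_deriv ?_
  rw [coth, div_pow, one_sub_div (pow_ne_zero 2 hz)]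
  ring

lemma hasDerivAt_mul_coth_mul (c : ℂ) {z : ℂ} (hz : sinh (c * z) ≠ 0) :
    HasDerivAt (fun w => c * coth (c * w)) (c ^ 2 - (c * coth (c * z)) ^ 2) z := by
  refine (((hasDerivAt_coth hz).comp z ((hasDerivAt_id z).const_mul c)).const_mul c).congr_deriv
    ?_
  ring

noncomputable def scaledCoth (c z : ℂ) : ℂ := zcoth (c * z) / z

lemma mul_scaledCoth (c : ℂ) {z : ℂ} (hz : z ≠ 0) : z * scaledCoth c z = zcoth (c * z) :=
  mul_div_cancel₀ _ hz

lemma scaledCoth_of_ne {c z : ℂ} (hc : c ≠ 0) (hz : z ≠ 0) :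
    scaledCoth c z = c * coth (c * z) := by
  rw [scaledCoth, zcoth_of_ne (mul_ne_zero hc hz)]
  field_simp

lemma scaledCoth_zero_left (z : ℂ) : scaledCoth 0 z = 1 / z := by simp [scaledCoth]

lemma theta_eq_scaledCoth {z : ℂ} (hz : z ≠ 0) : theta z = scaledCoth (1 / 2) z := by
  rw [scaledCoth_of_ne (one_div_ne_zero two_ne_zero) hz, theta, one_div_mul_eq_div 2 z]

lemma hasDerivAt_scaledCoth (c : ℂ) {z : ℂ} (hz : z ≠ 0) (hs : sinhc (c * z) ≠ 0) :
    HasDerivAt (scaledCoth c) (c ^ 2 - scaledCoth c z ^ 2) z := by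
  rcases eq_or_ne c 0 with rfl | hc
  · have h : scaledCoth 0 = fun w => w⁻¹ := funext fun w => by simp [scaledCoth_zero_left]
    rw [h]
    exact (hasDerivAt_inv hz).congr_deriv (by simp)
  · have hsinh : sinh (c * z) ≠ 0 := by
      have hcz := mul_ne_zero hc hz
      rw [sinhc_of_ne hcz] at hs
      exact div_ne_zero_iff.mp hs |>.1
    have h : scaledCoth c =ᶠ[𝓝 z] fun w => c * coth (c * w) :=
      (eventually_ne_nhds hz).mono fun w hw => scaledCoth_of_ne hc hw
    rw [scaledCoth_of_ne hc hz]
    exact (hasDerivAt_mul_coth_mul c hsinh).congr_of_eventuallyEq h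

lemma analyticAt_zcoth_mul (c : ℂ) : AnalyticAt ℂ (fun w => zcoth (c * w)) 0 := by
  have h : AnalyticAt ℂ zcoth (c * 0) := by simpa using analyticAt_zcoth
  exact h.fun_comp (analyticAt_const.mul analyticAt_id)

lemma eventually_sinhc_mul_ne_zero (c : ℂ) : ∀ᶠ z in 𝓝 0, sinhc (c * z) ≠ 0 :=
  (differentiable_sinhc.continuous.comp (continuous_const_mul c)).continuousAt.eventually_ne
    (by simp)

lemma hasDerivAt_mul_sub_of_riccati {χ G : ℂ → ℂ} {a z : ℂ} (hz : z ≠ 0)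
    (hχ : HasDerivAt χ (a - χ z ^ 2) z) (hG : HasDerivAt G (a - G z ^ 2) z) :
    HasDerivAt (fun w => w * (χ w - G w))
      (-((z * (χ z + G z) - 1) / z * (z * (χ z - G z)))) z :=
  (hasDerivAt_id' z |>.mul (hχ.sub hG)).congr_deriv (by field_simp; simp only [Pi.sub_apply]; ring)

theorem AnalyticAt.eventually_eq_zero_of_hasDerivAt_eq_neg_div_mul {E φ : ℂ → ℂ}
    (hE : AnalyticAt ℂ E 0) (hφ : ContinuousAt φ 0) (hφ0 : ∀ n : ℕ, (n : ℂ) + φ 0 ≠ 0)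
    (hode : ∀ᶠ z in 𝓝[≠] 0, HasDerivAt E (-(φ z / z * E z)) z) :
    ∀ᶠ z in 𝓝 0, E z = 0 := by
  rw [← analyticOrderAt_eq_top]
  by_contra hne
  obtain ⟨n, hn⟩ := ENat.ne_top_iff_exists.mp hne
  obtain ⟨g, hg, hg0, hEg⟩ := hE.analyticOrderAt_eq_natCast.mp hn.symm
  simp only [sub_zero, smul_eq_mul] at hEg
  -- Off `0`, the equation for `E = z ^ n g` divided by `z ^ (n - 1)` reads `ψ = 0`.
  set ψ : ℂ → ℂ := fun w => (n + φ w) * g w + w * deriv g w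
  have hψ : ContinuousAt ψ 0 :=
    ((continuousAt_const.add hφ).mul hg.continuousAt).add
      (continuousAt_id.mul hg.deriv.continuousAt)
  have hψ_eq : ∀ᶠ z in 𝓝[≠] 0, ψ z = 0 := by
    filter_upwards [hode, nhdsWithin_le_nhds hEg.eventually_nhds,
      nhdsWithin_le_nhds hg.eventually_analyticAt, self_mem_nhdsWithin]
      with z hEz hEg_z hg_z (hz : z ≠ 0)
    have hEz' := ((hasDerivAt_pow n z).mul hg_z.differentiableAt.hasDerivAt).congr_of_eventuallyEq
      hEg_z
    have hu := hEz.unique hEz'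
    rw [hEg_z.self_of_nhds] at hu
    have hpow : (n : ℂ) * z ^ (n - 1) * z = n * z ^ n := by
      rcases n with _ | m <;> simp [pow_succ, mul_assoc]
    have hψz : z ^ n * ψ z = 0 := by
      linear_combination (-z) * hu - z ^ n * g z * div_mul_cancel₀ (φ z) hz - g z * hpow
    exact (mul_eq_zero.mp hψz).resolve_left (pow_ne_zero n hz)
  have hψ0 : ψ 0 = 0 :=
    tendsto_nhds_unique (hψ.continuousWithinAt.tendsto (s := {0}ᶜ))
      (tendsto_const_nhds.congr' (EventuallyEq.symm hψ_eq))
  exact mul_ne_zero (hφ0 n) hg0 (by simpa [ψ] using hψ0)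

section Riccati

variable {F : ℂ → ℂ} {a b μ : ℂ}

lemma hasDerivAt_riccati_gap (hμ : μ = a ^ 2 - b ^ 2) {z : ℂ} (hz : z ≠ 0)
    (ha : sinhc (a * z) ≠ 0) (hb : sinhc (b * z) ≠ 0)
    (hF : HasDerivAt F (-(2 * scaledCoth a z * F z + F z ^ 2 + μ)) z) :
    HasDerivAt (fun w => w * F w + zcoth (a * w) - zcoth (b * w))
      (-((z * F z + zcoth (a * z) + zcoth (b * z) - 1) / z *
        (z * F z + zcoth (a * z) - zcoth (b * z)))) z := by
  have hχ : HasDerivAt (fun w => F w + scaledCoth a w) (b ^ 2 - (F z + scaledCoth a z) ^ 2) z :=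
    (hF.add (hasDerivAt_scaledCoth a hz ha)).congr_deriv (by rw [hμ]; ring)
  have hgap : (fun w => w * F w + zcoth (a * w) - zcoth (b * w)) =ᶠ[𝓝 z]
      fun w => w * (F w + scaledCoth a w - scaledCoth b w) :=
    (eventually_ne_nhds hz).mono fun w hw => by
      simp only [mul_sub, mul_add, mul_scaledCoth _ hw]
  have hG := hasDerivAt_scaledCoth b hz hb
  refine ((hasDerivAt_mul_sub_of_riccati hz hχ hG).congr_of_eventuallyEq hgap).congr_deriv ?_
  simp only [mul_sub, mul_add, mul_scaledCoth _ hz]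

lemma eventually_add_scaledCoth_eq (hμ : μ = a ^ 2 - b ^ 2) (hF : AnalyticAt ℂ F 0)
    (hode : ∀ᶠ z in 𝓝[≠] 0, HasDerivAt F (-(2 * scaledCoth a z * F z + F z ^ 2 + μ)) z) :
    ∀ᶠ z in 𝓝[≠] 0, F z + scaledCoth a z = scaledCoth b z := by
  have hgap : ∀ᶠ z in 𝓝 0, z * F z + zcoth (a * z) - zcoth (b * z) = 0 := by
    have hu : AnalyticAt ℂ (fun w => w * F w + zcoth (a * w)) 0 :=
      (analyticAt_id.mul hF).add (analyticAt_zcoth_mul a)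
    have hv := analyticAt_zcoth_mul b
    refine AnalyticAt.eventually_eq_zero_of_hasDerivAt_eq_neg_div_mul
      (φ := fun w => w * F w + zcoth (a * w) + zcoth (b * w) - 1) (hu.sub hv)
      ((hu.add hv).continuousAt.sub continuousAt_const)
      (fun n => by simpa using (Nat.cast_add_one_ne_zero n : (n : ℂ) + 1 ≠ 0)) ?_
    filter_upwards [hode, self_mem_nhdsWithin,
      nhdsWithin_le_nhds (eventually_sinhc_mul_ne_zero a),
      nhdsWithin_le_nhds (eventually_sinhc_mul_ne_zero b)] with z hFz hz ha hb
    exact hasDerivAt_riccati_gap hμ hz ha hb hFz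
  filter_upwards [self_mem_nhdsWithin, nhdsWithin_le_nhds hgap] with z (hz : z ≠ 0) hgap_z
  rw [← mul_right_inj' hz, mul_add, mul_scaledCoth _ hz, mul_scaledCoth _ hz]
  linear_combination hgap_z

end Riccati

lemma exists_pos_forall_of_eventually_nhdsNE {E : Type*} [NormedAddCommGroup E]
    {p : E → Prop} (h : ∀ᶠ z in 𝓝[≠] 0, p z) : ∃ δ > 0, ∀ z : E, 0 < ‖z‖ → ‖z‖ < δ → p z := by
  obtain ⟨δ, hδ, H⟩ := Metric.eventually_nhds_iff.mp (eventually_nhdsWithin_iff.mp h)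
  exact ⟨δ, hδ, fun z hz hzδ => H (by simpa using hzδ) (norm_pos_iff.mp hz)⟩

theorem stmt9_general (F : ℂ → ℂ) (μ ν : ℂ) (hμν : μ = 1 / 4 - ν ^ 2) (ε : ℝ) (hε : 0 < ε)
    (hdiff : ∀ z : ℂ, ‖z‖ < ε → DifferentiableAt ℂ F z)
    (heq : ∀ z : ℂ, 0 < ‖z‖ → ‖z‖ < ε →
      HasDerivAt F (-(2 * theta z * F z + F z ^ 2 + μ)) z) :
    (ν ≠ 0 → ∃ δ > 0, ∀ z : ℂ, 0 < ‖z‖ → ‖z‖ < δ →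
        F z + theta z = ν * coth (ν * z)) ∧
    (ν = 0 → ∃ δ > 0, ∀ z : ℂ, 0 < ‖z‖ → ‖z‖ < δ →
        F z + theta z = 1 / z) := by
  have hball : Metric.ball (0 : ℂ) ε ∈ 𝓝 0 := Metric.ball_mem_nhds 0 hε
  have hF : AnalyticAt ℂ F 0 := DifferentiableOn.analyticAt
    (fun z hz => (hdiff z (by simpa using hz)).differentiableWithinAt) hball
  have hode : ∀ᶠ z in 𝓝[≠] 0,
      HasDerivAt F (-(2 * scaledCoth (1 / 2) z * F z + F z ^ 2 + μ)) z := by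
    filter_upwards [self_mem_nhdsWithin, nhdsWithin_le_nhds hball] with z (hz : z ≠ 0) hzε
    rw [← theta_eq_scaledCoth hz]
    exact heq z (norm_pos_iff.mpr hz) (by simpa using hzε)
  have hsol : ∀ᶠ z in 𝓝[≠] 0, z ≠ 0 ∧ F z + theta z = scaledCoth ν z := by
    filter_upwards [eventually_add_scaledCoth_eq (b := ν) (by rw [hμν]; norm_num) hF hode,
      self_mem_nhdsWithin] with z h (hz : z ≠ 0)
    exact ⟨hz, by rwa [theta_eq_scaledCoth hz]⟩
  refine ⟨fun hν => exists_pos_forall_of_eventually_nhdsNE ?_,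
    fun hν => exists_pos_forall_of_eventually_nhdsNE ?_⟩
  · exact hsol.mono fun z ⟨hz, h⟩ => by rw [h, scaledCoth_of_ne hν hz]
  · exact hsol.mono fun z ⟨_, h⟩ => by rw [h, hν, scaledCoth_zero_left]

/-- Uniqueness: an odd holomorphic F near 0 with F(0) = 0 solving
F' + 2θF + F² + μ = 0 satisfies F + θ = ν·coth(νz) (or 1/z if ν = 0),
where μ = 1/4 − ν². -/
theorem stmt9 (F : ℂ → ℂ) (μ ν : ℂ) (hμν : μ = 1 / 4 - ν ^ 2) (ε : ℝ) (hε : 0 < ε)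
    (hdiff : ∀ z : ℂ, ‖z‖ < ε → DifferentiableAt ℂ F z)
    (hodd : ∀ z : ℂ, F (-z) = -F z) (h0 : F 0 = 0)
    (heq : ∀ z : ℂ, 0 < ‖z‖ → ‖z‖ < ε →
      HasDerivAt F (-(2 * theta z * F z + F z ^ 2 + μ)) z) :
    (ν ≠ 0 → ∃ δ > 0, ∀ z : ℂ, 0 < ‖z‖ → ‖z‖ < δ →
        F z + theta z = ν * coth (ν * z)) ∧
    (ν = 0 → ∃ δ > 0, ∀ z : ℂ, 0 < ‖z‖ → ‖z‖ < δ →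
        F z + theta z = 1 / z) :=
  stmt9_general F μ ν hμν ε hε hdiff heq
end

section
/- Suppose F is an odd holomorphic function on a disk {|z| < ε} with F(0) = 0, θ(z) = (1/2)coth(z/2), and F satisfies both the differential equation F' + 2θF + F² + μ = 0 and the functional equation F(z)F(w) − F(z+w)(F(z)+F(w)) − θ(z)(F(z+w)−F(w)) − θ(w)(F(z+w)−F(z)) − θ(z+w)(F(z)+F(w)) = μ on their common domain, with μ = 1/4 − ν², ν ≠ 0. Then F(z) = ν·coth(νz) − (1/2)coth(z/2) on a punctured neighborhood of 0. -/
open Complex Filter Topology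

/-!
Since `θ' = 1/4 - θ²`, the function `χ = F + θ` solves the Riccati equation `χ' = ν² - χ²`,
whose linearisation `χ = u'/u` gives `u'' = ν² u`. Accordingly, with `p = sinh (ν z)` and
`q = sinh (z / 2)`, the defect `W = p q F - (p' q - p q')` (that is, `p q (F - G)` for the claimed
solution `G = p'/p - q'/q`) satisfies the linear equation `W' = -F W`, also at `z = 0` where
`p = q = 0`. As `W 0 = 0`, multiplying by `exp` of a primitive of `F` on a disk shows `W = 0`.
-/

open Metric Set

theorem sinh_ne_zero_of_norm_lt_pi {z : ℂ} (h0 : z ≠ 0) (h : ‖z‖ < Real.pi) :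
    Complex.sinh z ≠ 0 := by
  intro hs
  obtain ⟨k, hk⟩ := Complex.sin_eq_zero_iff.mp
    (by rw [Complex.sin_mul_I, hs, zero_mul] : Complex.sin (z * I) = 0)
  have hk0 : k ≠ 0 := by
    rintro rfl
    simp [h0] at hk
  have hnorm : ‖z‖ = |(k : ℝ)| * Real.pi := by
    simpa [abs_of_pos Real.pi_pos] using congrArg norm hk
  have h1k : (1 : ℝ) ≤ |(k : ℝ)| := by exact_mod_cast Int.one_le_abs hk0
  nlinarith [Real.pi_pos]

theorem exists_pos_sinh_half_ne_zero_and_sinh_mul_ne_zero {ν : ℂ} (hν : ν ≠ 0) :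
    ∃ ρ > 0, ∀ z : ℂ, z ≠ 0 → ‖z‖ < ρ → sinh (z / 2) ≠ 0 ∧ sinh (ν * z) ≠ 0 := by
  refine ⟨Real.pi / (‖ν‖ + 1), by positivity, fun z hz hzρ => ?_⟩
  rw [lt_div_iff₀ (by positivity)] at hzρ
  refine ⟨sinh_ne_zero_of_norm_lt_pi (by simpa using hz) ?_,
    sinh_ne_zero_of_norm_lt_pi (mul_ne_zero hν hz) ?_⟩
  · rw [norm_div, RCLike.norm_ofNat]
    nlinarith [norm_nonneg z, norm_nonneg ν, Real.pi_pos]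
  · rw [norm_mul]
    nlinarith [norm_nonneg z]

theorem hasDerivAt_sinh_const_mul (c z : ℂ) :
    HasDerivAt (fun w => Complex.sinh (c * w)) (c * Complex.cosh (c * z)) z := by
  simpa [mul_comm] using ((hasDerivAt_id z).const_mul c).csinh

theorem hasDerivAt_const_mul_cosh_const_mul (c z : ℂ) :
    HasDerivAt (fun w => c * Complex.cosh (c * w)) (c ^ 2 * Complex.sinh (c * z)) z := by
  simpa [mul_comm, mul_assoc, sq] using (((hasDerivAt_id z).const_mul c).ccosh).const_mul c

theorem hasDerivAt_mul_mul_sub_wronskian {p p' q q' F : ℂ → ℂ} {a b F' z : ℂ}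
    (hp : HasDerivAt p (p' z) z) (hp' : HasDerivAt p' (a * p z) z)
    (hq : HasDerivAt q (q' z) z) (hq' : HasDerivAt q' (b * q z) z)
    (hF : HasDerivAt F F' z) :
    HasDerivAt (fun w => p w * q w * F w - (p' w * q w - p w * q' w))
      (-F z * (p z * q z * F z - (p' z * q z - p z * q' z))
        + p z * (q z * (F' + F z ^ 2 + (b - a)) + 2 * q' z * F z)) z := by
  refine (((hp.mul hq).mul hF).sub ((hp'.mul hq).sub (hp.mul hq'))).congr_deriv ?_
  simp only [Pi.mul_apply]
  ring

theorem eqOn_zero_of_hasDerivAt_eq_mul {f g : ℂ → ℂ} {c : ℂ} {r : ℝ}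
    (hg : DifferentiableOn ℂ g (ball c r))
    (hf : ∀ z ∈ ball c r, HasDerivAt f (g z * f z) z) (hc : f c = 0) :
    EqOn f 0 (ball c r) := by
  intro z hz
  obtain ⟨G, hG⟩ := hg.isExactOn_ball
  have hderiv : ∀ w ∈ ball c r, HasDerivAt (fun w => f w * exp (-G w)) 0 w := by
    intro w hw
    refine ((hf w hw).mul (hG w hw).neg.cexp).congr_deriv ?_
    simp only [Pi.neg_apply]
    ring
  have hconst := isOpen_ball.eqOn_of_deriv_eq (convex_ball c r).isPreconnected
    (fun w hw => (hderiv w hw).differentiableAt.differentiableWithinAt)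
    (differentiableOn_const 0) (fun w hw => (hderiv w hw).deriv.trans (deriv_const w 0).symm)
    (mem_ball_self (pos_of_mem_ball hz)) (by simp [hc]) hz
  simpa [exp_ne_zero] using hconst

noncomputable def solutionDefect (ν : ℂ) (F : ℂ → ℂ) (w : ℂ) : ℂ :=
  sinh (ν * w) * sinh (1 / 2 * w) * F w -
    (ν * cosh (ν * w) * sinh (1 / 2 * w) - sinh (ν * w) * (1 / 2 * cosh (1 / 2 * w)))

theorem hasDerivAt_solutionDefect (ν : ℂ) {F : ℂ → ℂ} {F' z : ℂ} (hF : HasDerivAt F F' z) :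
    HasDerivAt (solutionDefect ν F) (-F z * solutionDefect ν F z + sinh (ν * z) *
      (sinh (1 / 2 * z) * (F' + F z ^ 2 + (1 / 4 - ν ^ 2)) + cosh (1 / 2 * z) * F z)) z := by
  refine (hasDerivAt_mul_mul_sub_wronskian
    (p' := fun w => ν * cosh (ν * w)) (q' := fun w => 1 / 2 * cosh (1 / 2 * w))
    (hasDerivAt_sinh_const_mul ν z) (hasDerivAt_const_mul_cosh_const_mul ν z)
    (hasDerivAt_sinh_const_mul (1 / 2) z) (hasDerivAt_const_mul_cosh_const_mul (1 / 2) z)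
    hF).congr_deriv ?_
  rw [solutionDefect]
  ring

theorem hasDerivAt_solutionDefect_zero (ν : ℂ) {F : ℂ → ℂ} (hF : DifferentiableAt ℂ F 0) :
    HasDerivAt (solutionDefect ν F) (-F 0 * solutionDefect ν F 0) 0 :=
  (hasDerivAt_solutionDefect ν hF.hasDerivAt).congr_deriv (by simp)

theorem hasDerivAt_solutionDefect_of_riccati (ν : ℂ) {F : ℂ → ℂ} {z : ℂ}
    (hz : sinh (z / 2) ≠ 0)
    (hF : HasDerivAt F (-(2 * theta z * F z + F z ^ 2 + (1 / 4 - ν ^ 2))) z) :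
    HasDerivAt (solutionDefect ν F) (-F z * solutionDefect ν F z) z := by
  have hθ : theta z * sinh (1 / 2 * z) = 1 / 2 * cosh (1 / 2 * z) := by
    rw [theta, coth, one_div_mul_eq_div]
    field_simp
  refine (hasDerivAt_solutionDefect ν hF).congr_deriv ?_
  linear_combination (-2 * sinh (ν * z) * F z) * hθ

theorem eq_of_solutionDefect_eq_zero {ν : ℂ} {F : ℂ → ℂ} {z : ℂ} (hq : sinh (z / 2) ≠ 0)
    (hp : sinh (ν * z) ≠ 0) (hW : solutionDefect ν F z = 0) :
    F z = ν * coth (ν * z) - (1 / 2 : ℂ) * coth (z / 2) := by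
  rw [solutionDefect, one_div_mul_eq_div] at hW
  rw [coth, coth]
  field_simp
  linear_combination 2 * hW

theorem stmt19_general (F : ℂ → ℂ) (μ ν : ℂ) (hν : ν ≠ 0) (hμν : μ = 1 / 4 - ν ^ 2)
    (ε : ℝ) (hε : 0 < ε)
    (hdiff : ∀ z : ℂ, ‖z‖ < ε → DifferentiableAt ℂ F z)
    (hde : ∀ z : ℂ, 0 < ‖z‖ → ‖z‖ < ε →
      Complex.sinh (z / 2) ≠ 0 →
      HasDerivAt F (-(2 * theta z * F z + F z ^ 2 + μ)) z) :
    ∃ δ > 0, ∀ z : ℂ, 0 < ‖z‖ → ‖z‖ < δ →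
      F z = ν * coth (ν * z) - (1 / 2 : ℂ) * coth (z / 2) := by
  subst hμν
  obtain ⟨ρ, hρ, hsinh⟩ := exists_pos_sinh_half_ne_zero_and_sinh_mul_ne_zero hν
  have hδε : ∀ z ∈ ball (0 : ℂ) (min ε ρ), ‖z‖ < ε := fun z hz =>
    (mem_ball_zero_iff.1 hz).trans_le (min_le_left _ _)
  have hδρ : ∀ z ∈ ball (0 : ℂ) (min ε ρ), ‖z‖ < ρ := fun z hz =>
    (mem_ball_zero_iff.1 hz).trans_le (min_le_right _ _)
  have hW' : ∀ z ∈ ball (0 : ℂ) (min ε ρ),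
      HasDerivAt (solutionDefect ν F) (-F z * solutionDefect ν F z) z := by
    intro z hz
    rcases eq_or_ne z 0 with rfl | hz0
    · exact hasDerivAt_solutionDefect_zero ν (hdiff 0 (hδε 0 hz))
    · have hq := (hsinh z hz0 (hδρ z hz)).1
      exact hasDerivAt_solutionDefect_of_riccati ν hq
        (hde z (norm_pos_iff.2 hz0) (hδε z hz) hq)
  have hW : EqOn (solutionDefect ν F) 0 (ball 0 (min ε ρ)) :=
    eqOn_zero_of_hasDerivAt_eq_mul
      (fun z hz => (hdiff z (hδε z hz)).neg.differentiableWithinAt) hW'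
      (by simp [solutionDefect])
  refine ⟨min ε ρ, lt_min hε hρ, fun z hz hzδ => ?_⟩
  have hzδ' : z ∈ ball (0 : ℂ) (min ε ρ) := mem_ball_zero_iff.2 hzδ
  obtain ⟨hq, hp⟩ := hsinh z (norm_pos_iff.1 hz) (hδρ z hzδ')
  exact eq_of_solutionDefect_eq_zero hq hp (hW hzδ')

/-- Uniqueness (Proposition 2, scalar level): an odd holomorphic F near 0 with
F(0) = 0 satisfying the differential equation F' + 2θF + F² + μ = 0 and the
functional equation, with μ = 1/4 − ν², ν ≠ 0, equals ν·coth(νz) − (1/2)coth(z/2)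
near 0. -/
theorem stmt19 (F : ℂ → ℂ) (μ ν : ℂ) (hν : ν ≠ 0) (hμν : μ = 1 / 4 - ν ^ 2)
    (ε : ℝ) (hε : 0 < ε)
    (hdiff : ∀ z : ℂ, ‖z‖ < ε → DifferentiableAt ℂ F z)
    (hodd : ∀ z : ℂ, F (-z) = -F z) (h0 : F 0 = 0)
    (hde : ∀ z : ℂ, 0 < ‖z‖ → ‖z‖ < ε →
      Complex.sinh (z / 2) ≠ 0 →
      HasDerivAt F (-(2 * theta z * F z + F z ^ 2 + μ)) z)
    (hfe : ∀ z w : ℂ, ‖z‖ < ε → ‖w‖ < ε →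
      ‖z + w‖ < ε →
      Complex.sinh (z / 2) ≠ 0 → Complex.sinh (w / 2) ≠ 0 →
      Complex.sinh ((z + w) / 2) ≠ 0 →
      F z * F w - F (z + w) * (F z + F w)
        - theta z * (F (z + w) - F w)
        - theta w * (F (z + w) - F z)
        - theta (z + w) * (F z + F w) = μ) :
    ∃ δ > 0, ∀ z : ℂ, 0 < ‖z‖ → ‖z‖ < δ →
      F z = ν * coth (ν * z) - (1 / 2 : ℂ) * coth (z / 2) :=
  stmt19_general F μ ν hν hμν ε hε hdiff hde
end
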